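/- For each positive integer n, s(n) = 4·c(n) + n, where c is the Conolly-Fox sequence. -/

import Mathlib

/-- `Alist k` is the list `A_{k+1}`: `A_1 = [5]`, `A_{k+1} = A_k ++ A_k ++ [1]`. -/
def Alist : ℕ → List ℕ
  | 0 => [5]
  | k+1 => Alist k ++ Alist k ++ [1]

/-- `aseq n` is the `n`-th term (1-indexed) of the limit of the lists `A_k`;
`aseq 0 = 0` by convention. -/
def aseq (n : ℕ) : ℕ := (Alist n).getD (n - 1) 0

/-- Partial sums: `s n = a_1 + ⋯ + a_n`, `s 0 = 0`. -/
def s (n : ℕ) : ℕ := ∑ i ∈ Finset.Icc 1 n, aseq i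

/-!
Write `n + 1 = 2 · 2 ^ k + r` with `r < 2 · 2 ^ k`. Since `A_{k+2} = A_{k+1} ++ A_{k+1} ++ [1]`,
where `A_{k+1}` has length `2 · 2 ^ k - 1` and sum `6 · 2 ^ k - 1`, the partial sums satisfy
`s n + 1 = 6 · 2 ^ k + s r`. So `s n = 4 F n + n` for the function `F` with `F 0 = 0` and
`F n = 2 ^ k + F r`, and it remains to see that `F` obeys the Conolly–Fox recursion, which
determines `c` from `c 1` and `c 2` because `0 < F m ≤ m`. The recursion for `F` at `n` is proved
by induction over the same decomposition of `n + 1`: apart from the block boundaries,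
`n + 1, n, n - 1` are `r + 1, r, r - 1` shifted by `2 · 2 ^ k - 1`, and the bound `m < 2 F m` puts
both recursive arguments into the block one level down, where the claim becomes the recursion for
`F` at `r`.
-/

theorem Alist_length (k : ℕ) : (Alist k).length + 1 = 2 * 2 ^ k := by
  induction k with
  | zero => rfl
  | succ k ih => simp only [Alist, List.length_append, List.length_singleton, pow_succ]; omega

theorem Alist_sum (k : ℕ) : (Alist k).sum + 1 = 6 * 2 ^ k := by
  induction k with
  | zero => rfl
  | succ k ih => simp only [Alist, List.sum_append, List.sum_singleton, pow_succ]; omega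

theorem Alist_prefix_of_le {k m : ℕ} (h : k ≤ m) : Alist k <+: Alist m := by
  induction m, h using Nat.le_induction with
  | base => exact List.prefix_refl _
  | succ m _ ih => exact ih.trans ⟨Alist m ++ [1], by rw [Alist, List.append_assoc]⟩

theorem aseq_succ_eq_getElem {k n : ℕ} (h : n < (Alist k).length) :
    aseq (n + 1) = (Alist k)[n] := by
  have hn : n < (Alist (n + 1)).length := by
    have := Alist_length (n + 1)
    have := Nat.lt_two_pow_self (n := n + 1)
    omega
  rw [aseq, Nat.add_sub_cancel, List.getD_eq_getElem _ _ hn,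
    (Alist_prefix_of_le (le_max_right k (n + 1))).getElem hn,
    (Alist_prefix_of_le (le_max_left k (n + 1))).getElem h]

theorem s_eq_sum_take {k n : ℕ} (h : n ≤ (Alist k).length) : s n = ((Alist k).take n).sum := by
  induction n with
  | zero => rfl
  | succ n ih =>
    rw [s, Finset.sum_Icc_succ_top (by omega), ← s, ih (by omega), List.sum_take_succ _ _ h,
      aseq_succ_eq_getElem h]

theorem s_block {n k r : ℕ} (hr : r < 2 * 2 ^ k) (hn : n + 1 = 2 * 2 ^ k + r) :
    s n + 1 = 6 * 2 ^ k + s r := by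
  have hlen := Alist_length k
  have hsum := Alist_sum k
  rw [s_eq_sum_take (k := k + 1) (by have := Alist_length (k + 1); rw [pow_succ] at this; omega),
    s_eq_sum_take (k := k) (by omega), Alist, List.append_assoc, List.take_append,
    List.take_of_length_le (by omega), List.take_append_of_le_length (by omega), List.sum_append,
    show n - (Alist k).length = r by omega]
  omega

theorem Nat.two_pow_block_induction {P : ℕ → Prop} (zero : P 0)
    (block : ∀ n k r, r < 2 * 2 ^ k → n + 1 = 2 * 2 ^ k + r → P r → P n) (n : ℕ) :
    P n := by
  induction n using Nat.strong_induction_on with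
  | _ n ih =>
    rcases Nat.eq_zero_or_pos n with rfl | hn
    · exact zero
    obtain ⟨k, hk⟩ : ∃ k, Nat.log 2 (n + 1) = k + 1 :=
      Nat.exists_eq_succ_of_ne_zero (Nat.log_pos one_lt_two (by omega)).ne'
    have hlo := Nat.pow_log_le_self 2 n.succ_ne_zero
    have hhi := Nat.lt_pow_succ_log_self one_lt_two (n + 1)
    rw [hk, pow_succ'] at hlo hhi
    rw [pow_succ'] at hhi
    exact block n k (n + 1 - 2 * 2 ^ k) (by omega) (by omega) (ih _ (by omega))

-- The `F` of the header: for `n ≥ 1`, `2 ^ Nat.log 2 (n + 1)` is the `2 · 2 ^ k` of `n`.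
def conollyFox : ℕ → ℕ
  | 0 => 0
  | n + 1 => 2 ^ (Nat.log 2 (n + 2) - 1) + conollyFox (n + 2 - 2 ^ Nat.log 2 (n + 2))
  decreasing_by
    have := Nat.pow_le_pow_right two_pos (Nat.log_pos one_lt_two (by omega : 2 ≤ n + 2))
    omega

@[simp]
theorem conollyFox_zero : conollyFox 0 = 0 := by
  rw [conollyFox]

theorem conollyFox_block {n k r : ℕ} (hr : r < 2 * 2 ^ k) (hn : n + 1 = 2 * 2 ^ k + r) :
    conollyFox n = 2 ^ k + conollyFox r := by
  have hk := Nat.one_le_two_pow (n := k)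
  obtain ⟨m, rfl⟩ : ∃ m, n = m + 1 := ⟨n - 1, by omega⟩
  have hlog : Nat.log 2 (m + 2) = k + 1 :=
    Nat.log_eq_of_pow_le_of_lt_pow (by rw [pow_succ']; omega) (by rw [pow_succ', pow_succ']; omega)
  rw [conollyFox, hlog, Nat.add_sub_cancel, pow_succ']
  congr 2
  omega

theorem conollyFox_le_and_lt_two_mul (n : ℕ) :
    conollyFox n ≤ n ∧ (0 < n → n < 2 * conollyFox n) := by
  induction n using Nat.two_pow_block_induction with
  | zero => simp
  | block n k r hr hn ih =>
    rw [conollyFox_block hr hn]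
    have := Nat.one_le_two_pow (n := k)
    omega

theorem conollyFox_le (n : ℕ) : conollyFox n ≤ n :=
  (conollyFox_le_and_lt_two_mul n).1

theorem lt_two_mul_conollyFox {n : ℕ} (hn : 0 < n) : n < 2 * conollyFox n :=
  (conollyFox_le_and_lt_two_mul n).2 hn

theorem conollyFox_of_add_one_eq {n k : ℕ} (hn : n + 1 = 2 * 2 ^ k) : conollyFox n = 2 ^ k := by
  simpa using conollyFox_block (r := 0) (by positivity) hn

theorem conollyFox_of_add_two_eq {n k : ℕ} (hn : n + 2 = 4 * 2 ^ k) :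
    conollyFox n = 2 * 2 ^ k := by
  have := Nat.one_le_two_pow (n := k)
  rw [conollyFox_block (k := k) (r := 2 * 2 ^ k - 1) (by omega) (by omega),
    conollyFox_of_add_one_eq (k := k) (by omega)]
  ring

theorem conollyFox_one : conollyFox 1 = 1 :=
  conollyFox_of_add_one_eq (k := 0) rfl

theorem conollyFox_two : conollyFox 2 = 2 :=
  conollyFox_of_add_two_eq (k := 0) rfl

theorem conollyFox_three : conollyFox 3 = 2 :=
  conollyFox_of_add_one_eq (k := 1) rfl

theorem s_eq_four_mul_conollyFox_add (n : ℕ) : s n = 4 * conollyFox n + n := by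
  induction n using Nat.two_pow_block_induction with
  | zero => simp [s]
  | block n k r hr hn ih =>
    have := s_block hr hn
    rw [conollyFox_block hr hn]
    omega

def ConollyFoxRecAt (f : ℕ → ℕ) (n : ℕ) : Prop :=
  f (n + 1) = f (n + 1 - f n) + f (n - f (n - 1))

theorem conollyFoxRecAt_of_add_two_eq {n j : ℕ} (hn : n + 2 = 8 * 2 ^ j) :
    ConollyFoxRecAt conollyFox n := by
  have hp : 2 ^ (j + 1) = 2 * 2 ^ j := pow_succ' 2 j
  have hp' : 2 ^ (j + 2) = 4 * 2 ^ j := by rw [pow_succ', hp]; ring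
  have hj := Nat.one_le_two_pow (n := j)
  have hnext : conollyFox (n + 1) = 4 * 2 ^ j := by
    rw [conollyFox_of_add_one_eq (k := j + 2) (by omega), hp']
  have hcur : conollyFox n = 4 * 2 ^ j := by
    rw [conollyFox_of_add_two_eq (k := j + 1) (by omega), hp]; ring
  have hprev : conollyFox (n - 1) = 4 * 2 ^ j := by
    rw [conollyFox_block (k := j + 1) (r := 4 * 2 ^ j - 2) (by omega) (by omega),
      conollyFox_of_add_two_eq (k := j) (by omega), hp]
    ring
  rw [ConollyFoxRecAt, hnext, hcur, hprev,
    conollyFox_of_add_one_eq (n := n + 1 - _) (k := j + 1) (by omega),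
    conollyFox_of_add_two_eq (n := n - _) (k := j) (by omega), hp]
  ring

theorem conollyFoxRecAt_of_add_one_eq {n j : ℕ} (hn : n + 1 = 4 * 2 ^ j) :
    ConollyFoxRecAt conollyFox n := by
  have hp : 2 ^ (j + 1) = 2 * 2 ^ j := pow_succ' 2 j
  have hj := Nat.one_le_two_pow (n := j)
  have hnext : conollyFox (n + 1) = 2 * 2 ^ j + 1 := by
    rw [conollyFox_block (k := j + 1) (r := 1) (by omega) (by omega), hp, conollyFox_one]
  have hcur : conollyFox n = 2 * 2 ^ j := by
    rw [conollyFox_of_add_one_eq (k := j + 1) (by omega), hp]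
  have hprev : conollyFox (n - 1) = 2 * 2 ^ j := conollyFox_of_add_two_eq (by omega)
  rw [ConollyFoxRecAt, hnext, hcur, hprev,
    conollyFox_block (n := n + 1 - _) (k := j) (r := 1) (by omega) (by omega),
    conollyFox_of_add_one_eq (n := n - _) (k := j) (by omega), conollyFox_one]
  ring

theorem conollyFoxRecAt_of_block {n j t : ℕ} (ht : t + 2 < 4 * 2 ^ j) (hn : n = 4 * 2 ^ j + t)
    (ih : ConollyFoxRecAt conollyFox (t + 1)) : ConollyFoxRecAt conollyFox n := by
  have hp : 2 ^ (j + 1) = 2 * 2 ^ j := pow_succ' 2 j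
  have hj := Nat.one_le_two_pow (n := j)
  have hnext : conollyFox (n + 1) = 2 * 2 ^ j + conollyFox (t + 2) := by
    rw [conollyFox_block (k := j + 1) (r := t + 2) (by omega) (by omega), hp]
  have hcur : conollyFox n = 2 * 2 ^ j + conollyFox (t + 1) := by
    rw [conollyFox_block (k := j + 1) (r := t + 1) (by omega) (by omega), hp]
  have hprev : conollyFox (n - 1) = 2 * 2 ^ j + conollyFox t := by
    rw [conollyFox_block (k := j + 1) (r := t) (by omega) (by omega), hp]
  have ih : conollyFox (t + 2) =
      conollyFox (t + 2 - conollyFox (t + 1)) + conollyFox (t + 1 - conollyFox t) := ih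
  -- `t < 2 F t` and `t + 1 < 2 F (t + 1)` keep both recursive arguments below `2 * 2 ^ j`.
  have hle₁ := conollyFox_le (t + 1)
  have hlt₁ := lt_two_mul_conollyFox (by omega : 0 < t + 1)
  have hle₀ := conollyFox_le t
  have hlt₀ : t ≤ 2 * conollyFox t := by
    rcases t.eq_zero_or_pos with rfl | ht0
    · simp
    · exact (lt_two_mul_conollyFox ht0).le
  rw [ConollyFoxRecAt, hnext, hcur, hprev, ih,
    conollyFox_block (n := n + 1 - _) (k := j) (r := t + 2 - conollyFox (t + 1))
      (by omega) (by omega),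
    conollyFox_block (n := n - _) (k := j) (r := t + 1 - conollyFox t) (by omega) (by omega)]
  ring

theorem conollyFoxRecAt_conollyFox {n : ℕ} (hn : 1 ≤ n) : ConollyFoxRecAt conollyFox n := by
  suffices ∀ m n, m = n + 1 → 1 ≤ n → ConollyFoxRecAt conollyFox n from this _ n rfl hn
  intro m
  induction m using Nat.two_pow_block_induction with
  | zero => omega
  | block m k r hr hm ih =>
    rintro n rfl hn
    rcases r with _ | _ | t
    · rcases k with _ | _ | j
      · omega
      · obtain rfl : n = 2 := by omega
        simp [ConollyFoxRecAt, conollyFox_one, conollyFox_two, conollyFox_three]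
      · exact conollyFoxRecAt_of_add_two_eq (j := j) (by rw [pow_succ, pow_succ] at hm; omega)
    · rcases k with _ | j
      · obtain rfl : n = 1 := by omega
        simp [ConollyFoxRecAt, conollyFox_one, conollyFox_two]
      · exact conollyFoxRecAt_of_add_one_eq (j := j) (by rw [pow_succ] at hm; omega)
    · rcases k with _ | j
      · omega
      · rw [pow_succ] at hr hm
        exact conollyFoxRecAt_of_block (j := j) (t := t) (by omega) (by omega)
          (ih (t + 1) rfl (by omega))

theorem eq_of_conollyFoxRecAt {c g : ℕ → ℕ} (h1 : c 1 = g 1) (h2 : c 2 = g 2)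
    (hc : ∀ n, 2 ≤ n → ConollyFoxRecAt c n) (hg : ∀ n, 2 ≤ n → ConollyFoxRecAt g n)
    (hg_pos : ∀ n, 0 < n → 0 < g n) (hg_le : ∀ n, g n ≤ n) :
    ∀ n, 0 < n → c n = g n := by
  intro n
  induction n using Nat.strong_induction_on with
  | _ n ih =>
    intro hn
    rcases n with _ | _ | _ | m
    · omega
    · exact h1
    · exact h2
    · have hc' : c (m + 3) = c (m + 3 - c (m + 2)) + c (m + 2 - c (m + 1)) := hc (m + 2) (by omega)
      have hg' : g (m + 3) = g (m + 3 - g (m + 2)) + g (m + 2 - g (m + 1)) := hg (m + 2) (by omega)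
      have := hg_pos (m + 1) (by omega)
      have := hg_pos (m + 2) (by omega)
      have := hg_le (m + 1)
      have := hg_le (m + 2)
      rw [hc', hg', ih (m + 2) (by omega) (by omega), ih (m + 1) (by omega) (by omega),
        ih (m + 3 - g (m + 2)) (by omega) (by omega), ih (m + 2 - g (m + 1)) (by omega) (by omega)]

/-- For each positive integer `n`, `s(n) = 4·c(n) + n`, where `c` is the
Conolly–Fox sequence: `c(1) = 1`, `c(2) = 2`, and
`c(n+1) = c(n+1−c(n)) + c(n−c(n−1))` for `n ≥ 2`. -/
theorem s_eq_conolly_fox (c : ℕ → ℕ) (h1 : c 1 = 1) (h2 : c 2 = 2)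
    (hrec : ∀ n : ℕ, 2 ≤ n → c (n + 1) = c (n + 1 - c n) + c (n - c (n - 1))) :
    ∀ n : ℕ, 1 ≤ n → s n = 4 * c n + n := by
  have hc : ∀ n, 0 < n → c n = conollyFox n :=
    eq_of_conollyFoxRecAt (h1.trans conollyFox_one.symm) (h2.trans conollyFox_two.symm) hrec
      (fun _ hn => conollyFoxRecAt_conollyFox (by omega))
      (fun _ hn => by have := lt_two_mul_conollyFox hn; omega) conollyFox_le
  intro n hn
  rw [s_eq_four_mul_conollyFox_add, hc n hn]
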